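/- arXiv:2302.11334 — 8 statements merged into one kernel-verified Lean document; each statement's English description precedes it below -/
import Mathlib

section
/- Let T_p > 0, η > 0 and v₀ ∈ ℝ. Define v : [0, T_p) → ℝ by v(t) = tan( arctan(v₀) · ((T_p − t)/T_p)^η ). Then v(0) = v₀ and for every t ∈ [0, T_p), v is differentiable at t with v'(t) = −η (v(t)² + 1) arctan(v(t)) / (T_p − t). Moreover, if v₀ ≠ 0 then v(t) ≠ 0 for all t ∈ [0, T_p), and v(t) → 0 as t → T_p from the left. -/
open Filter Topology Set Real

/-! With `θ(t) = arctan v₀ · ((T_p − t)/T_p)^η` we have `v = tan ∘ θ`. The time profile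
`((T_p − t)/T_p)^η` lies in `(0, 1]` on `[0, T_p)`, so `|θ| ≤ |arctan v₀| < π/2` there;
hence `arctan ∘ v = θ`, and the chain rule with `tan' = tan² + 1` and
`θ' = −η θ/(T_p − t)` gives the differential equation. The profile tends to `0` at `T_p`,
and `tan` is continuous at `0`. -/

lemma abs_mul_rpow_le_abs (c : ℝ) {x η : ℝ} (hx₀ : 0 ≤ x) (hx₁ : x ≤ 1) (hη : 0 ≤ η) :
    |c * x ^ η| ≤ |c| := by
  rw [abs_mul, abs_of_nonneg (rpow_nonneg hx₀ η)]
  exact mul_le_of_le_one_right (abs_nonneg c) (rpow_le_one hx₀ hx₁ hη)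

lemma hasDerivAt_tan_sq_add_one {x : ℝ} (h : cos x ≠ 0) : HasDerivAt tan (tan x ^ 2 + 1) x :=
  (hasDerivAt_tan h).congr_deriv (by rw [← inv_one_add_tan_sq h, one_div, inv_inv, add_comm])

lemma hasDerivAt_mul_rpow_sub_div (c η : ℝ) {T t : ℝ} (hT : T ≠ 0) (ht : t ≠ T) :
    HasDerivAt (fun s => c * ((T - s) / T) ^ η) (-η * (c * ((T - t) / T) ^ η) / (T - t)) t := by
  have hr : (T - t) / T ≠ 0 := div_ne_zero (sub_ne_zero.2 ht.symm) hT
  have hlin : HasDerivAt (fun s => (T - s) / T) (-1 / T) t := by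
    simpa [neg_div] using ((hasDerivAt_id t).const_sub T).div_const T
  refine (((hasDerivAt_rpow_const (p := η) (Or.inl hr)).comp t hlin).const_mul c).congr_deriv ?_
  rw [rpow_sub_one hr]
  field_simp [sub_ne_zero.2 ht.symm]

lemma tendsto_mul_rpow_sub_div_nhds_zero (c T : ℝ) {η : ℝ} (hη : 0 < η) :
    Tendsto (fun s => c * ((T - s) / T) ^ η) (𝓝 T) (𝓝 0) := by
  have hlin : Tendsto (fun s => (T - s) / T) (𝓝 T) (𝓝 0) := by
    simpa using (((continuous_const (y := T)).sub continuous_id).div_const T).tendsto T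
  simpa [zero_rpow hη.ne'] using
    ((continuousAt_rpow_const 0 η (Or.inr hη.le)).tendsto.comp hlin).const_mul c

/-- The arctangent-type reference convergence differential function (Example 1):
`v(t) = tan(arctan(v₀) ((T_p − t)/T_p)^η)` satisfies `v(0) = v₀`, solves
`v' = −η (v² + 1) arctan(v)/(T_p − t)` on `[0, T_p)`, never vanishes there
when `v₀ ≠ 0`, and converges to `0` exactly as `t → T_p⁻`. -/
theorem rcdf_arctan
    (Tp η v₀ : ℝ) (hTp : 0 < Tp) (hη : 0 < η)
    (v : ℝ → ℝ)
    (hv : ∀ t, v t = Real.tan (Real.arctan v₀ * ((Tp - t) / Tp) ^ η)) :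
    v 0 = v₀ ∧
      (∀ t ∈ Ico (0 : ℝ) Tp,
        HasDerivAt v (-η * ((v t) ^ 2 + 1) * Real.arctan (v t) / (Tp - t)) t) ∧
      (v₀ ≠ 0 → ∀ t ∈ Ico (0 : ℝ) Tp, v t ≠ 0) ∧
      Tendsto v (𝓝[<] Tp) (𝓝 0) := by
  set θ : ℝ → ℝ := fun s => arctan v₀ * ((Tp - s) / Tp) ^ η with hθ
  have hvθ : v = tan ∘ θ := funext hv
  have hprofile_pos : ∀ t ∈ Ico 0 Tp, 0 < (Tp - t) / Tp := fun t ht =>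
    div_pos (by linarith [ht.2]) hTp
  have hθ_mem : ∀ t ∈ Ico 0 Tp, θ t ∈ Ioo (-(π / 2)) (π / 2) := fun t ht =>
    abs_lt.1 <| (abs_mul_rpow_le_abs _ (hprofile_pos t ht).le
      ((div_le_one hTp).2 (by linarith [ht.1])) hη.le).trans_lt (abs_lt.2 (arctan_mem_Ioo v₀))
  have harctan : ∀ t ∈ Ico 0 Tp, arctan (v t) = θ t := fun t ht =>
    (hv t).symm ▸ arctan_tan (hθ_mem t ht).1 (hθ_mem t ht).2
  refine ⟨?_, fun t ht => ?_, fun hv₀ t ht hvt => ?_, ?_⟩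
  · rw [hv, sub_zero, div_self hTp.ne', one_rpow, mul_one, tan_arctan]
  · rw [harctan t ht, hvθ]
    exact ((hasDerivAt_tan_sq_add_one (cos_pos_of_mem_Ioo (hθ_mem t ht)).ne').comp t
      (hasDerivAt_mul_rpow_sub_div _ η hTp.ne' ht.2.ne)).congr_deriv
      (by simp only [Function.comp_apply, hθ]; ring)
  · have h := harctan t ht
    rw [hvt, arctan_zero] at h
    exact mul_ne_zero (arctan_eq_zero_iff.not.2 hv₀)
      (rpow_pos_of_pos (hprofile_pos t ht) η).ne' h.symm
  · rw [hvθ, ← tan_zero]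
    exact (continuousAt_tan.2 (by simp)).tendsto.comp
      ((tendsto_mul_rpow_sub_div_nhds_zero _ Tp hη).mono_left nhdsWithin_le_nhds)
end

section
/- Let T_p > 0, η > 0 and v₀ ≥ 0. Define v : [0, T_p) → ℝ by v(t) = ln( 1 + (e^{v₀} − 1) ((T_p − t)/T_p)^η ). Then v(0) = v₀, v(t) ≥ 0 for all t, and for every t ∈ [0, T_p), v is differentiable at t with v'(t) = −η (1 − e^{−v(t)}) / (T_p − t). Moreover, if v₀ > 0 then v(t) > 0 for all t ∈ [0, T_p), and v(t) → 0 as t → T_p from the left. -/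
open Filter Topology Set Real

/-!
Writing `x = (T - t)/T`, the solution satisfies `e^v = 1 + (e^{v₀} - 1) x^η`, so
`1 - e^{-v} = (e^{v₀} - 1) x^η / e^v`; since `d/dt x^η = -η x^η / (T - t)`, differentiating
`log` of the right-hand side gives the differential equation. As `t → T`, `x^η → 0` because
`η > 0`, hence `v → log 1 = 0`.
-/

noncomputable section

def logRCDFSolution (T η v₀ t : ℝ) : ℝ :=
  log (1 + (exp v₀ - 1) * ((T - t) / T) ^ η)

variable {T η v₀ t : ℝ}

theorem one_le_one_add_exp_sub_one_mul {x : ℝ} (hv₀ : 0 ≤ v₀) (hx : 0 ≤ x) :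
    1 ≤ 1 + (exp v₀ - 1) * x := by
  have : 0 ≤ exp v₀ - 1 := sub_nonneg.mpr (one_le_exp hv₀)
  nlinarith

theorem one_lt_one_add_exp_sub_one_mul {x : ℝ} (hv₀ : 0 < v₀) (hx : 0 < x) :
    1 < 1 + (exp v₀ - 1) * x := by
  have : 0 < exp v₀ - 1 := sub_pos.mpr (one_lt_exp_iff.mpr hv₀)
  nlinarith

theorem hasDerivAt_sub_div_rpow (hT : 0 < T) (ht : t < T) :
    HasDerivAt (fun s => ((T - s) / T) ^ η) (-η * ((T - t) / T) ^ η / (T - t)) t := by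
  have hx : 0 < (T - t) / T := div_pos (sub_pos.mpr ht) hT
  have hinner : HasDerivAt (fun s => (T - s) / T) (-1 / T) t := by
    simpa using ((hasDerivAt_id t).const_sub T).div_const T
  convert hinner.rpow_const (p := η) (Or.inl hx.ne') using 1
  rw [rpow_sub_one hx.ne']
  field_simp [(sub_pos.mpr ht).ne']

theorem logRCDFSolution_zero (hT : T ≠ 0) : logRCDFSolution T η v₀ 0 = v₀ := by
  simp [logRCDFSolution, div_self hT]

theorem logRCDFSolution_nonneg (hT : 0 ≤ T) (hv₀ : 0 ≤ v₀) (ht : t ≤ T) :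
    0 ≤ logRCDFSolution T η v₀ t :=
  log_nonneg <| one_le_one_add_exp_sub_one_mul hv₀ <|
    rpow_nonneg (div_nonneg (sub_nonneg.mpr ht) hT) η

theorem logRCDFSolution_pos (hT : 0 < T) (hv₀ : 0 < v₀) (ht : t < T) :
    0 < logRCDFSolution T η v₀ t :=
  log_pos <| one_lt_one_add_exp_sub_one_mul hv₀ <|
    rpow_pos_of_pos (div_pos (sub_pos.mpr ht) hT) η

theorem hasDerivAt_logRCDFSolution (hT : 0 < T) (hv₀ : 0 ≤ v₀) (ht : t < T) :
    HasDerivAt (logRCDFSolution T η v₀)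
      (-η * (1 - exp (-logRCDFSolution T η v₀ t)) / (T - t)) t := by
  set c := exp v₀ - 1
  set w := 1 + c * ((T - t) / T) ^ η
  have hw : 0 < w := one_pos.trans_le <|
    one_le_one_add_exp_sub_one_mul hv₀ (rpow_nonneg (div_nonneg (sub_nonneg.mpr ht.le) hT.le) η)
  have hexp : exp (-logRCDFSolution T η v₀ t) = w⁻¹ := by
    rw [logRCDFSolution, exp_neg, exp_log hw]
  refine ((((hasDerivAt_sub_div_rpow hT ht).const_mul c).const_add 1).log hw.ne').congr_deriv ?_
  change c * (-η * ((T - t) / T) ^ η / (T - t)) / w = _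
  rw [hexp]
  field_simp [(sub_pos.mpr ht).ne']
  ring

theorem tendsto_logRCDFSolution (hη : 0 < η) :
    Tendsto (logRCDFSolution T η v₀) (𝓝 T) (𝓝 0) := by
  have hcont : ContinuousAt (logRCDFSolution T η v₀) T := by
    refine ContinuousAt.log ?_ (by simp [zero_rpow hη.ne'])
    exact continuousAt_const.add <| continuousAt_const.mul <|
      (continuousAt_const.sub continuousAt_id).div_const T |>.rpow_const (Or.inr hη.le)
  simpa [logRCDFSolution, zero_rpow hη.ne'] using hcont.tendsto

end

/-- The logarithmic reference convergence differential function (Example 1),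
for nonnegative solutions: `v(t) = ln(1 + (e^{v₀} − 1)((T_p − t)/T_p)^η)`
satisfies `v(0) = v₀`, stays nonnegative, solves
`v' = −η (1 − e^{−v})/(T_p − t)` on `[0, T_p)`, stays positive there when
`v₀ > 0`, and converges to `0` exactly as `t → T_p⁻`. -/
theorem rcdf_log
    (Tp η v₀ : ℝ) (hTp : 0 < Tp) (hη : 0 < η) (hv₀ : 0 ≤ v₀)
    (v : ℝ → ℝ)
    (hv : ∀ t, v t = Real.log (1 + (Real.exp v₀ - 1) * ((Tp - t) / Tp) ^ η)) :
    v 0 = v₀ ∧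
      (∀ t ∈ Ico (0 : ℝ) Tp, 0 ≤ v t) ∧
      (∀ t ∈ Ico (0 : ℝ) Tp,
        HasDerivAt v (-η * (1 - Real.exp (-(v t))) / (Tp - t)) t) ∧
      (0 < v₀ → ∀ t ∈ Ico (0 : ℝ) Tp, 0 < v t) ∧
      Tendsto v (𝓝[<] Tp) (𝓝 0) := by
  obtain rfl : v = logRCDFSolution Tp η v₀ := funext hv
  exact ⟨logRCDFSolution_zero hTp.ne',
    fun t ht => logRCDFSolution_nonneg hTp.le hv₀ ht.2.le,
    fun t ht => hasDerivAt_logRCDFSolution hTp hv₀ ht.2,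
    fun hv₀ t ht => logRCDFSolution_pos hTp hv₀ ht.2,
    (tendsto_logRCDFSolution hη).mono_left nhdsWithin_le_nhds⟩
end

section
/- Suppose V : [0, ∞) → ℝ is differentiable, V(τ) ≥ 0 for all τ ≥ 0, and V'(τ) ≤ −V(τ)^{3/2} − V(τ)^{1/2} for all τ ≥ 0. Then V(τ) = 0 for all τ ≥ π. -/
open Set Real

/-!
Along a solution that stays positive, `t ↦ arctan √(V t) + t / 2` is nonincreasing, because
`(arctan √V)' = V' / (2 √V (1 + V))` and `V^{3/2} + V^{1/2} = √V (1 + V)`. Since `arctan √V`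
ranges in `(0, π/2)` while `V > 0`, a positive solution lives on an interval of length less than `π`.
As `V` is nonincreasing and nonnegative, it must therefore vanish from time `π` on.
-/

theorem antitoneOn_of_forall_hasDerivAt_nonpos {D : Set ℝ} (hD : Convex ℝ D) {f f' : ℝ → ℝ}
    (hf : ∀ x ∈ D, HasDerivAt f (f' x) x) (hf' : ∀ x ∈ D, f' x ≤ 0) : AntitoneOn f D :=
  antitoneOn_of_hasDerivWithinAt_nonpos hD
    (fun x hx => (hf x hx).continuousAt.continuousWithinAt)
    (fun x hx => (hf x (interior_subset hx)).hasDerivWithinAt)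
    (fun x hx => hf' x (interior_subset hx))

theorem rpow_three_halves_add_rpow_one_half {x : ℝ} (hx : 0 ≤ x) :
    x ^ ((3 : ℝ) / 2) + x ^ ((1 : ℝ) / 2) = √x * (1 + x) := by
  have h3 : x ^ ((3 : ℝ) / 2) = x * √x := by
    rw [show (3 : ℝ) / 2 = 1 + 1 / 2 by norm_num, rpow_add' hx (by norm_num), rpow_one,
      sqrt_eq_rpow]
  rw [h3, ← sqrt_eq_rpow]
  ring

theorem arctan_sqrt_deriv_le_neg_half {x v : ℝ} (hx : 0 < x)
    (hv : v ≤ -(x ^ ((3 : ℝ) / 2)) - x ^ ((1 : ℝ) / 2)) :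
    1 / (1 + √x ^ 2) * (v / (2 * √x)) ≤ -(1 / 2) := by
  have hs : 0 < √x := sqrt_pos.mpr hx
  rw [sq_sqrt hx.le, one_div_mul_eq_div, div_div, div_le_iff₀ (by positivity)]
  have := rpow_three_halves_add_rpow_one_half hx.le
  linarith

section FixedTimeInequality

variable {V V' : ℝ → ℝ}

theorem antitoneOn_arctan_sqrt_add_half {D : Set ℝ} (hD : Convex ℝ D)
    (hd : ∀ t ∈ D, HasDerivAt V (V' t) t) (hpos : ∀ t ∈ D, 0 < V t)
    (hineq : ∀ t ∈ D, V' t ≤ -(V t ^ ((3 : ℝ) / 2)) - V t ^ ((1 : ℝ) / 2)) :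
    AntitoneOn (fun t => arctan √(V t) + t / 2) D := by
  refine antitoneOn_of_forall_hasDerivAt_nonpos hD
    (f' := fun t => 1 / (1 + √(V t) ^ 2) * (V' t / (2 * √(V t))) + 1 / 2)
    (fun t ht => ?_) (fun t ht => ?_)
  · exact (((hd t ht).sqrt (hpos t ht).ne').arctan).add ((hasDerivAt_id t).div_const 2)
  · linarith [arctan_sqrt_deriv_le_neg_half (hpos t ht) (hineq t ht)]

theorem sub_lt_pi_of_forall_pos {a b : ℝ}
    (hd : ∀ t ∈ Icc a b, HasDerivAt V (V' t) t) (hpos : ∀ t ∈ Icc a b, 0 < V t)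
    (hineq : ∀ t ∈ Icc a b, V' t ≤ -(V t ^ ((3 : ℝ) / 2)) - V t ^ ((1 : ℝ) / 2)) :
    b - a < π := by
  rcases lt_or_ge b a with hba | hab
  · linarith [pi_pos]
  have hmono := antitoneOn_arctan_sqrt_add_half (convex_Icc a b) hd hpos hineq
    (left_mem_Icc.mpr hab) (right_mem_Icc.mpr hab) hab
  have hb : 0 < arctan √(V b) := arctan_pos.mpr (sqrt_pos.mpr (hpos b (right_mem_Icc.mpr hab)))
  linarith [arctan_lt_pi_div_two √(V a)]

end FixedTimeInequality

/-- Remark 2: a nonnegative function satisfying the fixed-time differential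
inequality `V' ≤ −V^{3/2} − V^{1/2}` on `[0, ∞)` vanishes for all `τ ≥ π`. -/
theorem fixed_time_vanishing
    (V V' : ℝ → ℝ)
    (hd : ∀ τ ∈ Ici (0 : ℝ), HasDerivAt V (V' τ) τ)
    (hnn : ∀ τ ∈ Ici (0 : ℝ), 0 ≤ V τ)
    (hineq : ∀ τ ∈ Ici (0 : ℝ),
      V' τ ≤ -(V τ ^ ((3 : ℝ) / 2)) - V τ ^ ((1 : ℝ) / 2)) :
    ∀ τ, Real.pi ≤ τ → V τ = 0 := by
  intro τ hτ
  have hτ0 : 0 ≤ τ := pi_pos.le.trans hτ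
  have hanti : AntitoneOn V (Ici 0) := by
    refine antitoneOn_of_forall_hasDerivAt_nonpos (convex_Ici 0) hd fun t ht => ?_
    have := rpow_three_halves_add_rpow_one_half (hnn t ht)
    nlinarith [hineq t ht, sqrt_nonneg (V t), hnn t ht]
  by_contra hne
  have hVτ : 0 < V τ := (hnn τ hτ0).lt_of_ne' hne
  have := sub_lt_pi_of_forall_pos (a := 0) (b := τ) (fun t ht => hd t ht.1)
    (fun t ht => hVτ.trans_le (hanti ht.1 hτ0 ht.2)) (fun t ht => hineq t ht.1)
  linarith
end

section
/- Let T_p > 0 and k > 0. Suppose V : [0, T_p) → ℝ is differentiable, V(t) ≥ 0 for all t, and V'(t) = −k (1 − e^{−V(t)}) / (T_p − t) for all t ∈ [0, T_p). Then V(t) = ln( 1 + (e^{V(0)} − 1) ((T_p − t)/T_p)^k ) for all t ∈ [0, T_p). In particular, if V(0) > 0 then V(t) > 0 for all t ∈ [0, T_p) and V(t) → 0 as t → T_p from the left, i.e., V vanishes exactly at the prescribed instant T_p. -/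
open Filter Topology Set Real

/-!
Substituting `w = e^V - 1` turns the Lyapunov equation into the linear equation
`w' = -k w / (T_p - t)`, along which `w (T_p - t)^{-k}` is constant; hence
`e^{V(t)} - 1 = (e^{V(0)} - 1) ((T_p - t)/T_p)^k`, and the limit at `T_p` is read off this
closed form.
-/

theorem hasDerivAt_mul_rpow_neg_eq_zero {w : ℝ → ℝ} {T k t : ℝ} (ht : t < T)
    (hw : HasDerivAt w (-k * w t / (T - t)) t) :
    HasDerivAt (fun s => w s * (T - s) ^ (-k)) 0 t := by
  have hpos : 0 < T - t := sub_pos.mpr ht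
  have hpow : HasDerivAt (fun s => (T - s) ^ (-k)) (-1 * (-k) * (T - t) ^ (-k - 1)) t :=
    ((hasDerivAt_id t).const_sub T).rpow_const (Or.inl hpos.ne')
  refine (hw.mul hpow).congr_deriv ?_
  rw [rpow_sub hpos, rpow_one]
  field_simp
  ring

theorem eq_mul_div_rpow_of_hasDerivAt {w : ℝ → ℝ} {a T k : ℝ}
    (hw : ∀ t ∈ Ico a T, HasDerivAt w (-k * w t / (T - t)) t) :
    ∀ t ∈ Ico a T, w t = w a * ((T - t) / (T - a)) ^ k := by
  intro t ht
  have hsub : Icc a t ⊆ Ico a T := fun s hs => ⟨hs.1, hs.2.trans_lt ht.2⟩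
  have hzero : ∀ s ∈ Icc a t, HasDerivAt (fun s => w s * (T - s) ^ (-k)) 0 s :=
    fun s hs => hasDerivAt_mul_rpow_neg_eq_zero (hsub hs).2 (hw s (hsub hs))
  have hconst : w t * (T - t) ^ (-k) = w a * (T - a) ^ (-k) :=
    constant_of_has_deriv_right_zero (fun s hs => (hzero s hs).continuousAt.continuousWithinAt)
      (fun s hs => (hzero s (Ico_subset_Icc_self hs)).hasDerivWithinAt) t ⟨ht.1, le_rfl⟩
  have hTt : 0 < T - t := sub_pos.mpr ht.2
  have hTa : 0 < T - a := sub_pos.mpr (ht.1.trans_lt ht.2)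
  rw [rpow_neg hTt.le, rpow_neg hTa.le] at hconst
  rw [div_rpow hTt.le hTa.le]
  have := (rpow_pos_of_pos hTt k).ne'
  have := (rpow_pos_of_pos hTa k).ne'
  field_simp at hconst ⊢
  linarith

theorem tendsto_log_one_add_mul_rpow_nhdsLT {T k : ℝ} (hk : 0 < k) (c : ℝ) :
    Tendsto (fun t => log (1 + c * ((T - t) / T) ^ k)) (𝓝[<] T) (𝓝 0) := by
  have hcont : ContinuousAt (fun t => log (1 + c * ((T - t) / T) ^ k)) T := by
    refine ContinuousAt.log ?_ (by simp [zero_rpow hk.ne'])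
    exact continuousAt_const.add (continuousAt_const.mul
      ((continuousAt_const.sub continuousAt_id).div_const T |>.rpow_const (Or.inr hk.le)))
  simpa [zero_rpow hk.ne'] using hcont.tendsto.mono_left nhdsWithin_le_nhds

theorem prescribed_instant_exact_general
    (Tp k : ℝ) (hTp : 0 < Tp) (hk : 0 < k)
    (V V' : ℝ → ℝ)
    (hd : ∀ t ∈ Ico (0 : ℝ) Tp, HasDerivAt V (V' t) t)
    (heq : ∀ t ∈ Ico (0 : ℝ) Tp,
      V' t = -k * (1 - Real.exp (-(V t))) / (Tp - t)) :
    (∀ t ∈ Ico (0 : ℝ) Tp,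
      V t = Real.log (1 + (Real.exp (V 0) - 1) * ((Tp - t) / Tp) ^ k)) ∧
      (0 < V 0 →
        (∀ t ∈ Ico (0 : ℝ) Tp, 0 < V t) ∧ Tendsto V (𝓝[<] Tp) (𝓝 0)) := by
  have hw : ∀ t ∈ Ico (0 : ℝ) Tp, HasDerivAt (fun s => exp (V s) - 1)
      (-k * (exp (V t) - 1) / (Tp - t)) t := fun t ht =>
    ((hd t ht).exp.sub_const 1).congr_deriv (by
      rw [heq t ht, exp_neg]
      field_simp)
  have hform : ∀ t ∈ Ico (0 : ℝ) Tp,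
      V t = log (1 + (exp (V 0) - 1) * ((Tp - t) / Tp) ^ k) := fun t ht => by
    have hsol := eq_mul_div_rpow_of_hasDerivAt hw t ht
    rw [sub_zero] at hsol
    rw [← hsol, add_sub_cancel, log_exp]
  refine ⟨hform, fun hV0 => ⟨fun t ht => ?_, ?_⟩⟩
  · have hc : 0 < exp (V 0) - 1 := sub_pos.mpr (one_lt_exp_iff.mpr hV0)
    have hr : 0 < ((Tp - t) / Tp) ^ k := rpow_pos_of_pos (div_pos (sub_pos.mpr ht.2) hTp) k
    rw [hform t ht]
    exact log_pos (lt_add_of_pos_right 1 (mul_pos hc hr))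
  · refine (tendsto_log_one_add_mul_rpow_nhdsLT hk (exp (V 0) - 1)).congr' ?_
    filter_upwards [Ioo_mem_nhdsLT hTp] with t ht
    exact (hform t (Ioo_subset_Ico_self ht)).symm

/-- Remark 3 (free-will strong arbitrary time / prescribed-instant stability
for a scalar Lyapunov function): if `V ≥ 0` satisfies the EQUALITY
`V' = −k(1 − e^{−V})/(T_p − t)` on `[0, T_p)`, then
`V(t) = ln(1 + (e^{V(0)} − 1)((T_p − t)/T_p)^k)`; in particular, if
`V(0) > 0` then `V` stays positive on `[0, T_p)` and tends to `0` as
`t → T_p⁻`, i.e. `V` vanishes exactly at the prescribed instant `T_p`. -/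
theorem prescribed_instant_exact
    (Tp k : ℝ) (hTp : 0 < Tp) (hk : 0 < k)
    (V V' : ℝ → ℝ)
    (hd : ∀ t ∈ Ico (0 : ℝ) Tp, HasDerivAt V (V' t) t)
    (hnn : ∀ t ∈ Ico (0 : ℝ) Tp, 0 ≤ V t)
    (heq : ∀ t ∈ Ico (0 : ℝ) Tp,
      V' t = -k * (1 - Real.exp (-(V t))) / (Tp - t)) :
    (∀ t ∈ Ico (0 : ℝ) Tp,
      V t = Real.log (1 + (Real.exp (V 0) - 1) * ((Tp - t) / Tp) ^ k)) ∧
      (0 < V 0 →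
        (∀ t ∈ Ico (0 : ℝ) Tp, 0 < V t) ∧ Tendsto V (𝓝[<] Tp) (𝓝 0)) :=
  prescribed_instant_exact_general Tp k hTp hk V V' hd heq
end

section
/- Let T_p > 0 and k₁ > 0. Suppose V : [0, T_p) → ℝ is differentiable, V(t) ≥ 0 for all t, and V'(t) ≤ −k₁ (1 − e^{−V(t)}) / (T_p − t) for all t ∈ [0, T_p). Then V(t) ≤ ln( 1 + (e^{V(0)} − 1) ((T_p − t)/T_p)^{k₁} ) for all t ∈ [0, T_p), and consequently V(t) → 0 as t → T_p from the left. -/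
open Filter Topology Set Real

/-! Substituting `W = e^V - 1` turns the differential inequality into the linear one
`W' ≤ -k₁ W / (T_p - t)`, so `W · (T_p - t)^(-k₁)` is nonincreasing on `[0, T_p)`. This gives the
bound, whose right-hand side tends to `log 1 = 0` as `t → T_p`, squeezing `V ≥ 0` to zero. -/

section LinearComparison

variable {a T k : ℝ} {W W' : ℝ → ℝ}

theorem antitoneOn_mul_rpow_neg_of_deriv_le
    (hd : ∀ t ∈ Ico a T, HasDerivAt W (W' t) t)
    (hle : ∀ t ∈ Ico a T, W' t ≤ -k * W t / (T - t)) :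
    AntitoneOn (fun t => W t * (T - t) ^ (-k)) (Ico a T) := by
  have hderiv : ∀ t ∈ Ico a T, HasDerivAt (fun s => W s * (T - s) ^ (-k))
      (W' t * (T - t) ^ (-k) + W t * (-1 * -k * (T - t) ^ (-k - 1))) t := fun t ht =>
    (hd t ht).mul (((hasDerivAt_id t).const_sub T).rpow_const (Or.inl (sub_ne_zero.2 ht.2.ne')))
  refine antitoneOn_of_hasDerivWithinAt_nonpos (convex_Ico a T)
    (fun t ht => (hderiv t ht).continuousAt.continuousWithinAt)
    (fun t ht => (hderiv t (interior_subset ht)).hasDerivWithinAt) fun t ht => ?_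
  obtain ⟨ht, htT⟩ := interior_subset (s := Ico a T) ht
  have hpos : 0 < T - t := sub_pos.2 htT
  rw [rpow_sub_one hpos.ne']
  calc W' t * (T - t) ^ (-k) + W t * (-1 * -k * ((T - t) ^ (-k) / (T - t)))
      ≤ -k * W t / (T - t) * (T - t) ^ (-k) + W t * (-1 * -k * ((T - t) ^ (-k) / (T - t))) := by
        gcongr; exact hle t ⟨ht, htT⟩
    _ = 0 := by ring

theorem le_mul_div_rpow_of_deriv_le
    (hd : ∀ t ∈ Ico a T, HasDerivAt W (W' t) t)
    (hle : ∀ t ∈ Ico a T, W' t ≤ -k * W t / (T - t)) {t : ℝ} (ht : t ∈ Ico a T) :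
    W t ≤ W a * ((T - t) / (T - a)) ^ k := by
  have hTt : 0 < T - t := sub_pos.2 ht.2
  have hTa : 0 < T - a := sub_pos.2 (ht.1.trans_lt ht.2)
  have hmono : W t * (T - t) ^ (-k) ≤ W a * (T - a) ^ (-k) :=
    antitoneOn_mul_rpow_neg_of_deriv_le hd hle (left_mem_Ico.2 (ht.1.trans_lt ht.2)) ht ht.1
  rw [rpow_neg hTt.le, rpow_neg hTa.le, ← div_eq_mul_inv, ← div_eq_mul_inv,
    div_le_iff₀ (rpow_pos_of_pos hTt k)] at hmono
  rwa [div_rpow hTt.le hTa.le, ← mul_div_assoc, mul_div_right_comm]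

end LinearComparison

theorem exp_mul_le_of_le_neg_mul_one_sub_exp_neg {v d k c : ℝ}
    (h : d ≤ -k * (1 - exp (-v)) / c) : exp v * d ≤ -k * (exp v - 1) / c := by
  have hexp : exp v * (1 - exp (-v)) = exp v - 1 := by
    rw [mul_sub, ← exp_add, add_neg_cancel, exp_zero, mul_one]
  calc exp v * d ≤ exp v * (-k * (1 - exp (-v)) / c) := by gcongr
    _ = -k * (exp v - 1) / c := by rw [← hexp]; ring

theorem tendsto_log_one_add_mul_div_rpow {T k : ℝ} (c : ℝ) (hk : 0 < k) :
    Tendsto (fun t => log (1 + c * ((T - t) / T) ^ k)) (𝓝 T) (𝓝 0) := by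
  have hcont : ContinuousAt (fun t => log (1 + c * ((T - t) / T) ^ k)) T := by
    refine ContinuousAt.log ?_ (by simp [zero_rpow hk.ne'])
    exact continuousAt_const.add
      (continuousAt_const.mul (ContinuousAt.rpow_const (by fun_prop) (Or.inr hk.le)))
  simpa [zero_rpow hk.ne'] using hcont.tendsto

/-- Remark 3, upper clamp: a nonnegative Lyapunov function satisfying
`V' ≤ −k₁(1 − e^{−V})/(T_p − t)` on `[0, T_p)` satisfies
`V(t) ≤ ln(1 + (e^{V(0)} − 1)((T_p − t)/T_p)^{k₁})`, and consequently
converges to zero no later than the prescribed instant `T_p`. -/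
theorem prescribed_instant_upper_clamp
    (Tp k₁ : ℝ) (hTp : 0 < Tp) (hk : 0 < k₁)
    (V V' : ℝ → ℝ)
    (hd : ∀ t ∈ Ico (0 : ℝ) Tp, HasDerivAt V (V' t) t)
    (hnn : ∀ t ∈ Ico (0 : ℝ) Tp, 0 ≤ V t)
    (hineq : ∀ t ∈ Ico (0 : ℝ) Tp,
      V' t ≤ -k₁ * (1 - Real.exp (-(V t))) / (Tp - t)) :
    (∀ t ∈ Ico (0 : ℝ) Tp,
      V t ≤ Real.log (1 + (Real.exp (V 0) - 1) * ((Tp - t) / Tp) ^ k₁)) ∧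
      Tendsto V (𝓝[<] Tp) (𝓝 0) := by
  have hbound : ∀ t ∈ Ico (0 : ℝ) Tp,
      V t ≤ log (1 + (exp (V 0) - 1) * ((Tp - t) / Tp) ^ k₁) := by
    intro t ht
    have hexp := le_mul_div_rpow_of_deriv_le (W := fun s => exp (V s) - 1)
      (fun s hs => (hd s hs).exp.sub_const 1)
      (fun s hs => exp_mul_le_of_le_neg_mul_one_sub_exp_neg (hineq s hs)) ht
    rw [← log_exp (V t)]
    exact log_le_log (exp_pos _) (by rw [sub_zero] at hexp; linarith)
  refine ⟨hbound, tendsto_of_tendsto_of_tendsto_of_le_of_le' tendsto_const_nhds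
    ((tendsto_log_one_add_mul_div_rpow (exp (V 0) - 1) hk).mono_left nhdsWithin_le_nhds) ?_ ?_⟩ <;>
  filter_upwards [Ioo_mem_nhdsLT hTp] with t ht
  · exact hnn t (Ioo_subset_Ico_self ht)
  · exact hbound t (Ioo_subset_Ico_self ht)
end

section
/- Let T_p > 0 and k₂ > 0. Suppose V : [0, T_p) → ℝ is differentiable, V(t) ≥ 0 for all t, and V'(t) ≥ −k₂ (1 − e^{−V(t)}) / (T_p − t) for all t ∈ [0, T_p). Then V(t) ≥ ln( 1 + (e^{V(0)} − 1) ((T_p − t)/T_p)^{k₂} ) for all t ∈ [0, T_p). In particular, if V(0) > 0 then V(t) > 0 for every t ∈ [0, T_p), so V does not converge to zero before the instant T_p. -/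
open Filter Topology Set Real

/-! Multiplying the inequality by `e^V` turns it into the linear inequality
`W' ≥ -k W / (T - t)` for `W = e^V - 1`, so `W (T - t)^(-k)` is nondecreasing. Comparing its
values at `0` and `t` gives `e^(V t) - 1 ≥ (e^(V 0) - 1) ((T - t) / T)^k`, and taking logarithms
gives the bound. -/

theorem neg_mul_exp_sub_one_le_of_neg_mul_div_le {k v v' d : ℝ} (hd : 0 < d)
    (h : -k * (1 - exp (-v)) / d ≤ v') : -k * (exp v - 1) ≤ exp v * v' * d := by
  have hexp : exp v * (1 - exp (-v)) = exp v - 1 := by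
    rw [mul_sub, mul_one, ← exp_add, add_neg_cancel, exp_zero]
  calc -k * (exp v - 1) = exp v * (-k * (1 - exp (-v))) := by rw [← hexp]; ring
    _ ≤ exp v * (v' * d) := mul_le_mul_of_nonneg_left ((div_le_iff₀ hd).mp h) (exp_pos v).le
    _ = exp v * v' * d := by ring

theorem hasDerivAt_exp_sub_one_mul_rpow {V : ℝ → ℝ} {v' T k s : ℝ} (hV : HasDerivAt V v' s)
    (hs : s < T) :
    HasDerivAt (fun t => (exp (V t) - 1) * (T - t) ^ (-k))
      ((T - s) ^ (-k - 1) * (exp (V s) * v' * (T - s) + k * (exp (V s) - 1))) s := by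
  have hpos : 0 < T - s := sub_pos.mpr hs
  refine ((hV.exp.sub_const 1).mul
    (((hasDerivAt_id' s).const_sub T).rpow_const (p := -k) (Or.inl hpos.ne'))).congr_deriv ?_
  rw [rpow_sub_one hpos.ne']
  field_simp

theorem monotoneOn_exp_sub_one_mul_rpow {V V' : ℝ → ℝ} {T k : ℝ} {s : Set ℝ}
    (hs : Convex ℝ s) (hsT : s ⊆ Iio T) (hd : ∀ t ∈ s, HasDerivAt V (V' t) t)
    (hineq : ∀ t ∈ s, -k * (1 - exp (-(V t))) / (T - t) ≤ V' t) :
    MonotoneOn (fun t => (exp (V t) - 1) * (T - t) ^ (-k)) s := by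
  have hG t (ht : t ∈ s) := hasDerivAt_exp_sub_one_mul_rpow (k := k) (hd t ht) (hsT ht)
  refine monotoneOn_of_hasDerivWithinAt_nonneg hs
    (fun t ht => (hG t ht).continuousAt.continuousWithinAt)
    (fun t ht => (hG t (interior_subset ht)).hasDerivWithinAt) fun t ht => ?_
  have ht := interior_subset ht
  have hpos : 0 < T - t := sub_pos.mpr (hsT ht)
  have := neg_mul_exp_sub_one_le_of_neg_mul_div_le hpos (hineq t ht)
  exact mul_nonneg (rpow_pos_of_pos hpos _).le (by linarith)

theorem exp_sub_one_mul_rpow_le_exp_sub_one {V V' : ℝ → ℝ} {T k t : ℝ} (hT : 0 < T)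
    (hd : ∀ t ∈ Ico 0 T, HasDerivAt V (V' t) t)
    (hineq : ∀ t ∈ Ico 0 T, -k * (1 - exp (-(V t))) / (T - t) ≤ V' t) (ht : t ∈ Ico 0 T) :
    (exp (V 0) - 1) * ((T - t) / T) ^ k ≤ exp (V t) - 1 := by
  have hTt : 0 < T - t := sub_pos.mpr ht.2
  have hmono := monotoneOn_exp_sub_one_mul_rpow (convex_Ico 0 T) (fun _ h => h.2) hd hineq
    (left_mem_Ico.mpr hT) ht ht.1
  simp only [sub_zero] at hmono
  calc (exp (V 0) - 1) * ((T - t) / T) ^ k = (exp (V 0) - 1) * T ^ (-k) * (T - t) ^ k := by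
        rw [div_rpow hTt.le hT.le, rpow_neg hT.le]; ring
    _ ≤ (exp (V t) - 1) * (T - t) ^ (-k) * (T - t) ^ k :=
        mul_le_mul_of_nonneg_right hmono (by positivity)
    _ = exp (V t) - 1 := by rw [mul_assoc, ← rpow_add hTt, neg_add_cancel, rpow_zero, mul_one]

theorem prescribed_instant_lower_clamp_general
    (Tp k₂ : ℝ) (hTp : 0 < Tp)
    (V V' : ℝ → ℝ)
    (hd : ∀ t ∈ Ico (0 : ℝ) Tp, HasDerivAt V (V' t) t)
    (hnn : ∀ t ∈ Ico (0 : ℝ) Tp, 0 ≤ V t)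
    (hineq : ∀ t ∈ Ico (0 : ℝ) Tp,
      -k₂ * (1 - Real.exp (-(V t))) / (Tp - t) ≤ V' t) :
    (∀ t ∈ Ico (0 : ℝ) Tp,
      Real.log (1 + (Real.exp (V 0) - 1) * ((Tp - t) / Tp) ^ k₂) ≤ V t) ∧
      (0 < V 0 → ∀ t ∈ Ico (0 : ℝ) Tp, 0 < V t) := by
  have hE0 : 1 ≤ exp (V 0) := one_le_exp (hnn 0 ⟨le_rfl, hTp⟩)
  have hlog : ∀ t ∈ Ico (0 : ℝ) Tp,
      log (1 + (exp (V 0) - 1) * ((Tp - t) / Tp) ^ k₂) ≤ V t := by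
    intro t ht
    have hr : 0 ≤ ((Tp - t) / Tp) ^ k₂ :=
      rpow_nonneg (div_nonneg (sub_nonneg.mpr ht.2.le) hTp.le) k₂
    rw [log_le_iff_le_exp (add_pos_of_pos_of_nonneg one_pos (mul_nonneg (sub_nonneg.mpr hE0) hr))]
    linarith [exp_sub_one_mul_rpow_le_exp_sub_one hTp hd hineq ht]
  refine ⟨hlog, fun hV0 t ht => (log_pos ?_).trans_le (hlog t ht)⟩
  have hr : 0 < ((Tp - t) / Tp) ^ k₂ := rpow_pos_of_pos (div_pos (sub_pos.mpr ht.2) hTp) k₂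
  exact lt_add_of_pos_right 1 (mul_pos (sub_pos.mpr (one_lt_exp_iff.mpr hV0)) hr)

/-- Remark 3, lower clamp: a nonnegative Lyapunov function satisfying the
reversed inequality `V' ≥ −k₂(1 − e^{−V})/(T_p − t)` on `[0, T_p)` satisfies
`V(t) ≥ ln(1 + (e^{V(0)} − 1)((T_p − t)/T_p)^{k₂})`; in particular, if
`V(0) > 0` then `V` stays positive on `[0, T_p)`, so it does not converge to
zero before the instant `T_p`. -/
theorem prescribed_instant_lower_clamp
    (Tp k₂ : ℝ) (hTp : 0 < Tp) (hk : 0 < k₂)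
    (V V' : ℝ → ℝ)
    (hd : ∀ t ∈ Ico (0 : ℝ) Tp, HasDerivAt V (V' t) t)
    (hnn : ∀ t ∈ Ico (0 : ℝ) Tp, 0 ≤ V t)
    (hineq : ∀ t ∈ Ico (0 : ℝ) Tp,
      -k₂ * (1 - Real.exp (-(V t))) / (Tp - t) ≤ V' t) :
    (∀ t ∈ Ico (0 : ℝ) Tp,
      Real.log (1 + (Real.exp (V 0) - 1) * ((Tp - t) / Tp) ^ k₂) ≤ V t) ∧
      (0 < V 0 → ∀ t ∈ Ico (0 : ℝ) Tp, 0 < V t) :=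
  prescribed_instant_lower_clamp_general Tp k₂ hTp V V' hd hnn hineq
end

section
/- Let n ≥ 2, T_p > 0, and η₁, …, ηₙ > 0, and set η_min = min(η₁, …, ηₙ) and η_max = max(η₁, …, ηₙ). Suppose z = (z₁, …, zₙ) : [0, T_p) → ℝⁿ is differentiable and satisfies z₁'(t) = z₂(t) − η₁ z₁(t)/(T_p − t); zᵢ'(t) = z_{i+1}(t) − z_{i−1}(t) − ηᵢ zᵢ(t)/(T_p − t) for 2 ≤ i ≤ n−1; and zₙ'(t) = −z_{n−1}(t) − ηₙ zₙ(t)/(T_p − t), for all t ∈ [0, T_p). Then for all t ∈ [0, T_p), ‖z(0)‖² ((T_p − t)/T_p)^{2η_max} ≤ ‖z(t)‖² ≤ ‖z(0)‖² ((T_p − t)/T_p)^{2η_min}, where ‖·‖ is the Euclidean norm. Consequently z(t) → 0 as t → T_p from the left, and if z(0) ≠ 0 then z(t) ≠ 0 for every t ∈ [0, T_p): the settling time of z equals exactly the prescribed instant T_p. -/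
open Filter Topology Set Finset

/-!
Put `V = ∑ zᵢ²`. The couplings `z_{i+1} - z_{i-1}` are skew-symmetric, so they cancel in
`V' = 2 ∑ zᵢ zᵢ'` and leave `(T_p - t) V' = -2 ∑ ηᵢ zᵢ²`, which lies between `-2 η_max V` and
`-2 η_min V`. Since `((T_p - t)^(-c) V)' = (T_p - t)^(-c-1) ((T_p - t) V' + c V)`, the function
`(T_p - t)^(-c) V` is monotone for `c = 2 η_min` and `c = 2 η_max`, which gives the two bounds.
The upper one forces `V → 0` as `t → T_p⁻`; the lower one keeps `V > 0` on `[0, T_p)`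
when `V 0 > 0`.
-/

theorem le_mul_div_rpow_of_hasDerivAt {T c : ℝ} (hT : 0 < T) {V V' : ℝ → ℝ}
    (hV : ∀ t ∈ Ico 0 T, HasDerivAt V (V' t) t)
    (hV' : ∀ t ∈ Ico 0 T, V' t * (T - t) + c * V t ≤ 0) {t : ℝ} (ht : t ∈ Ico 0 T) :
    V t ≤ V 0 * ((T - t) / T) ^ c := by
  have hpos : ∀ x ∈ Ico 0 T, 0 < T - x := fun x hx => sub_pos.2 hx.2
  have hF : ∀ x ∈ Ico 0 T, HasDerivAt (fun y => V y * (T - y) ^ (-c))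
      ((T - x) ^ (-c - 1) * (V' x * (T - x) + c * V x)) x := by
    intro x hx
    have hx' := (hpos x hx).ne'
    refine ((hV x hx).mul (((hasDerivAt_id x).const_sub T).rpow_const (p := -c)
      (Or.inl hx'))).congr_deriv ?_
    simp only [id]
    rw [Real.rpow_sub_one hx']
    field_simp
  have hanti : AntitoneOn (fun y => V y * (T - y) ^ (-c)) (Ico 0 T) :=
    antitoneOn_of_hasDerivWithinAt_nonpos (convex_Ico 0 T)
      (fun x hx => (hF x hx).continuousAt.continuousWithinAt)
      (fun x hx => (hF x (interior_subset hx)).hasDerivWithinAt)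
      (fun x hx => mul_nonpos_of_nonneg_of_nonpos
        (Real.rpow_nonneg (hpos x (interior_subset hx)).le _) (hV' x (interior_subset hx)))
  have hFt := hanti ⟨le_rfl, hT⟩ ht ht.1
  have ha : 0 < (T - t) ^ c := Real.rpow_pos_of_pos (hpos t ht) c
  have hb : 0 < T ^ c := Real.rpow_pos_of_pos hT c
  simp only [sub_zero, Real.rpow_neg (hpos t ht).le, Real.rpow_neg hT.le, ← div_eq_mul_inv] at hFt
  rw [div_le_div_iff₀ ha hb] at hFt
  rw [Real.div_rpow (hpos t ht).le hT.le, mul_div_assoc', le_div_iff₀ hb]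
  exact hFt

theorem mul_div_rpow_le_of_hasDerivAt {T c : ℝ} (hT : 0 < T) {V V' : ℝ → ℝ}
    (hV : ∀ t ∈ Ico 0 T, HasDerivAt V (V' t) t)
    (hV' : ∀ t ∈ Ico 0 T, 0 ≤ V' t * (T - t) + c * V t) {t : ℝ} (ht : t ∈ Ico 0 T) :
    V 0 * ((T - t) / T) ^ c ≤ V t := by
  have := le_mul_div_rpow_of_hasDerivAt (c := c) (V := -V) (V' := -V') hT
    (fun s hs => (hV s hs).neg) (fun s hs => by simp only [Pi.neg_apply]; linarith [hV' s hs]) ht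
  simpa only [Pi.neg_apply, neg_mul, neg_le_neg_iff] using this

theorem tendsto_nhdsLT_zero_of_le_mul_div_rpow {T C c : ℝ} (hT : 0 < T) (hc : 0 < c)
    {V : ℝ → ℝ} (hV₀ : ∀ t ∈ Ico 0 T, 0 ≤ V t)
    (hV : ∀ t ∈ Ico 0 T, V t ≤ C * ((T - t) / T) ^ c) :
    Tendsto V (𝓝[<] T) (𝓝 0) := by
  have hIco : Ico 0 T ∈ 𝓝[<] T := Ico_mem_nhdsLT hT
  have hlim : Tendsto (fun t => C * ((T - t) / T) ^ c) (𝓝[<] T) (𝓝 0) := by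
    have : ContinuousAt (fun t => C * ((T - t) / T) ^ c) T := by
      fun_prop (disch := exact Or.inr hc.le)
    simpa [Real.zero_rpow hc.ne'] using this.tendsto.mono_left nhdsWithin_le_nhds
  exact tendsto_of_tendsto_of_tendsto_of_le_of_le' tendsto_const_nhds hlim
    (eventually_of_mem hIco hV₀) (eventually_of_mem hIco hV)

/-- `z_{i+1} - z_{i-1}` with `z_0 = z_{n+1} = 0`, so that all `n` equations of the chain
take one form. -/
def chainCoupling (n : ℕ) (x : ℕ → ℝ) (i : ℕ) : ℝ :=
  (if i < n then x (i + 1) else 0) - (if 1 < i then x (i - 1) else 0)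

theorem sum_mul_chainCoupling_eq_zero (n : ℕ) (x : ℕ → ℝ) :
    ∑ i ∈ Finset.Icc 1 n, x i * chainCoupling n x i = 0 := by
  simp only [chainCoupling, mul_sub, mul_ite, mul_zero, Finset.sum_sub_distrib, ← Finset.sum_filter]
  have hnext : (Finset.Icc 1 n).filter (· < n) = Finset.Ico 1 n := by
    ext; simp only [Finset.mem_filter, Finset.mem_Icc, Finset.mem_Ico]; omega
  have hprev : (Finset.Icc 1 n).filter (1 < ·) = Finset.Ico (1 + 1) (n + 1) := by
    ext; simp only [Finset.mem_filter, Finset.mem_Icc, Finset.mem_Ico]; omega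
  rw [hnext, hprev, ← Finset.sum_Ico_add', sub_eq_zero]
  exact Finset.sum_congr rfl fun i _ => by rw [Nat.add_sub_cancel, mul_comm]

theorem hasDerivAt_chainCoupling {n : ℕ} (hn : 2 ≤ n) {s : Set ℝ} {z d : ℕ → ℝ → ℝ}
    (hz1 : ∀ t ∈ s, HasDerivAt (z 1) (z 2 t - d 1 t) t)
    (hzi : ∀ i, 2 ≤ i → i ≤ n - 1 → ∀ t ∈ s,
      HasDerivAt (z i) (z (i + 1) t - z (i - 1) t - d i t) t)
    (hzn : ∀ t ∈ s, HasDerivAt (z n) (-z (n - 1) t - d n t) t) :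
    ∀ i ∈ Finset.Icc 1 n, ∀ t ∈ s,
      HasDerivAt (z i) (chainCoupling n (z · t) i - d i t) t := by
  intro i hi t ht
  obtain ⟨h1i, hin⟩ := Finset.mem_Icc.1 hi
  rcases h1i.eq_or_lt with rfl | h1i
  · simpa [chainCoupling, show 1 < n by omega] using hz1 t ht
  rcases hin.eq_or_lt with rfl | hin
  · simpa [chainCoupling, h1i] using hzn t ht
  · simpa [chainCoupling, h1i, hin] using hzi i h1i (by omega) t ht

theorem hasDerivAt_sum_sq_of_chainCoupling {n : ℕ} {z : ℕ → ℝ → ℝ} {d : ℕ → ℝ} {t : ℝ}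
    (hz : ∀ i ∈ Finset.Icc 1 n, HasDerivAt (z i) (chainCoupling n (z · t) i - d i) t) :
    HasDerivAt (fun s => ∑ i ∈ Finset.Icc 1 n, z i s ^ 2)
      (-2 * ∑ i ∈ Finset.Icc 1 n, z i t * d i) t := by
  have h := HasDerivAt.fun_sum fun i hi => (hz i hi).pow 2
  refine h.congr_deriv ?_
  have hskew := sum_mul_chainCoupling_eq_zero n (z · t)
  simp only [Nat.cast_ofNat, pow_one, Nat.add_one_sub_one]
  calc ∑ i ∈ Finset.Icc 1 n, 2 * z i t * (chainCoupling n (z · t) i - d i)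
      = 2 * ∑ i ∈ Finset.Icc 1 n, z i t * chainCoupling n (z · t) i
          - 2 * ∑ i ∈ Finset.Icc 1 n, z i t * d i := by
        rw [Finset.mul_sum, Finset.mul_sum, ← Finset.sum_sub_distrib]
        exact Finset.sum_congr rfl fun i _ => by ring
    _ = -2 * ∑ i ∈ Finset.Icc 1 n, z i t * d i := by rw [hskew]; ring

theorem sum_sq_bounds_of_chainCoupling {n : ℕ} {T ηmin ηmax : ℝ} (hT : 0 < T) {η : ℕ → ℝ}
    (hmin : ∀ i ∈ Finset.Icc 1 n, ηmin ≤ η i) (hmax : ∀ i ∈ Finset.Icc 1 n, η i ≤ ηmax)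
    {z : ℕ → ℝ → ℝ} (hz : ∀ i ∈ Finset.Icc 1 n, ∀ t ∈ Ico 0 T,
      HasDerivAt (z i) (chainCoupling n (z · t) i - η i * z i t / (T - t)) t)
    {t : ℝ} (ht : t ∈ Ico 0 T) :
    (∑ i ∈ Finset.Icc 1 n, z i 0 ^ 2) * ((T - t) / T) ^ (2 * ηmax)
        ≤ ∑ i ∈ Finset.Icc 1 n, z i t ^ 2 ∧
      ∑ i ∈ Finset.Icc 1 n, z i t ^ 2
        ≤ (∑ i ∈ Finset.Icc 1 n, z i 0 ^ 2) * ((T - t) / T) ^ (2 * ηmin) := by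
  have hV : ∀ s ∈ Ico 0 T, HasDerivAt (fun s => ∑ i ∈ Finset.Icc 1 n, z i s ^ 2)
      (-2 * ∑ i ∈ Finset.Icc 1 n, z i s * (η i * z i s / (T - s))) s :=
    fun s hs => hasDerivAt_sum_sq_of_chainCoupling fun i hi => hz i hi s hs
  have hV' : ∀ s ∈ Ico 0 T,
      (-2 * ∑ i ∈ Finset.Icc 1 n, z i s * (η i * z i s / (T - s))) * (T - s)
        = -2 * ∑ i ∈ Finset.Icc 1 n, η i * z i s ^ 2 := by
    intro s hs
    have := (sub_pos.2 hs.2).ne'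
    rw [mul_assoc, Finset.sum_mul]
    congr 1
    exact Finset.sum_congr rfl fun i _ => by field_simp
  refine ⟨mul_div_rpow_le_of_hasDerivAt hT hV (fun s hs => ?_) ht,
    le_mul_div_rpow_of_hasDerivAt hT hV (fun s hs => ?_) ht⟩
  · have := Finset.sum_le_sum fun i hi => mul_le_mul_of_nonneg_right (hmax i hi) (sq_nonneg (z i s))
    rw [← Finset.mul_sum] at this
    linarith [hV' s hs]
  · have := Finset.sum_le_sum fun i hi => mul_le_mul_of_nonneg_right (hmin i hi) (sq_nonneg (z i s))
    rw [← Finset.mul_sum] at this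
    linarith [hV' s hs]

/-- Core of Theorem 1 (prescribed-instant stability): for the backstepping
error dynamics of the `n`-th order integrator chain with the linear reference
convergence differential functions `ψᵢ(zᵢ,t) = ηᵢ zᵢ/(T_p − t)`, the squared
Euclidean norm `‖z(t)‖² = Σᵢ zᵢ(t)²` is clamped between
`‖z(0)‖² ((T_p − t)/T_p)^{2η_max}` and `‖z(0)‖² ((T_p − t)/T_p)^{2η_min}`;
consequently `z(t) → 0` as `t → T_p⁻`, and if `z(0) ≠ 0` then `z(t) ≠ 0` for
every `t ∈ [0, T_p)`: the settling time equals exactly `T_p`. -/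
theorem prescribed_instant_stability
    (n : ℕ) (hn : 2 ≤ n) (Tp : ℝ) (hTp : 0 < Tp)
    (η : ℕ → ℝ) (hη : ∀ i ∈ Finset.Icc 1 n, 0 < η i)
    (ηmin ηmax : ℝ)
    (hmin : IsLeast {r : ℝ | ∃ i ∈ Finset.Icc 1 n, η i = r} ηmin)
    (hmax : IsGreatest {r : ℝ | ∃ i ∈ Finset.Icc 1 n, η i = r} ηmax)
    (z : ℕ → ℝ → ℝ)
    (hz1 : ∀ t ∈ Ico (0 : ℝ) Tp,
      HasDerivAt (z 1) (z 2 t - η 1 * z 1 t / (Tp - t)) t)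
    (hzi : ∀ i, 2 ≤ i → i ≤ n - 1 → ∀ t ∈ Ico (0 : ℝ) Tp,
      HasDerivAt (z i) (z (i + 1) t - z (i - 1) t - η i * z i t / (Tp - t)) t)
    (hzn : ∀ t ∈ Ico (0 : ℝ) Tp,
      HasDerivAt (z n) (-z (n - 1) t - η n * z n t / (Tp - t)) t) :
    (∀ t ∈ Ico (0 : ℝ) Tp,
      (∑ i ∈ Finset.Icc 1 n, (z i 0) ^ 2) * ((Tp - t) / Tp) ^ (2 * ηmax)
          ≤ ∑ i ∈ Finset.Icc 1 n, (z i t) ^ 2 ∧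
        ∑ i ∈ Finset.Icc 1 n, (z i t) ^ 2
          ≤ (∑ i ∈ Finset.Icc 1 n, (z i 0) ^ 2) * ((Tp - t) / Tp) ^ (2 * ηmin)) ∧
      Tendsto (fun t => ∑ i ∈ Finset.Icc 1 n, (z i t) ^ 2) (𝓝[<] Tp) (𝓝 0) ∧
      ((∃ i ∈ Finset.Icc 1 n, z i 0 ≠ 0) →
        ∀ t ∈ Ico (0 : ℝ) Tp, ∃ i ∈ Finset.Icc 1 n, z i t ≠ 0) := by
  have hz := hasDerivAt_chainCoupling (d := fun i t => η i * z i t / (Tp - t)) hn hz1 hzi hzn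
  have hbounds := fun t ht => sum_sq_bounds_of_chainCoupling hTp
    (fun i hi => hmin.2 ⟨i, hi, rfl⟩) (fun i hi => hmax.2 ⟨i, hi, rfl⟩) hz (t := t) ht
  have hηmin : 0 < ηmin := by
    obtain ⟨i, hi, rfl⟩ := hmin.1
    exact hη i hi
  refine ⟨hbounds, tendsto_nhdsLT_zero_of_le_mul_div_rpow hTp (by positivity)
    (fun t _ => by positivity) fun t ht => (hbounds t ht).2, ?_⟩
  rintro ⟨i, hi, hzi0⟩ t ht
  have hV₀ : 0 < ∑ j ∈ Finset.Icc 1 n, z j 0 ^ 2 :=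
    Finset.sum_pos' (fun j _ => sq_nonneg _) ⟨i, hi, by positivity⟩
  have hVt : 0 < ∑ j ∈ Finset.Icc 1 n, z j t ^ 2 :=
    (mul_pos hV₀ (Real.rpow_pos_of_pos (div_pos (sub_pos.2 ht.2) hTp) _)).trans_le
      (hbounds t ht).1
  obtain ⟨j, hj, hzj⟩ := Finset.exists_ne_zero_of_sum_ne_zero hVt.ne'
  exact ⟨j, hj, ne_of_apply_ne (· ^ 2) (by simpa using hzj)⟩
end

section
/- Let T_p > 0, c ∈ ℝ, η₁ > 2 and η₂ > 1. Consider the double integrator x₁' = x₂, x₂' = u(x₁, x₂, t) on [0, T_p) with the backstepping controller u(x₁, x₂, t) = −η₁ x₂/(T_p − t) − η₁ (x₁ − c)/(T_p − t)² − (x₁ − c) − η₂ (x₂ + η₁ (x₁ − c)/(T_p − t))/(T_p − t). Then every differentiable solution (x₁, x₂) : [0, T_p) → ℝ² of this closed-loop system satisfies x₁(t) → c, x₂(t) → 0, and u(x₁(t), x₂(t), t) → 0 as t → T_p from the left. -/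
/-!
In the error coordinates `z₁ = x₁ - c`, `z₂ = x₂ + η₁ z₁ / (T_p - t)` the closed loop reads
`z₁' = z₂ - η₁ z₁ / (T_p - t)`, `z₂' = -z₁ - η₂ z₂ / (T_p - t)`. The Lyapunov function
`z₁² + z₂²` then decays like `(T_p - t) ^ (2μ)` with `μ = min η₁ η₂ > 1`. Feeding this bound on `z₂`
back into the `z₁`-equation improves the decay of `z₁²` to `(T_p - t) ^ s` with `s > 4`, which is
where `η₁ > 2` enters. These rates make `z₁ / (T_p - t) ^ 2` and `z₂ / (T_p - t)` tend to zero, and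
`x₂` and `u` are linear combinations of such quotients.
-/

open Filter Topology Set

theorem le_mul_rpow_of_sub_mul_deriv_add_le {T a b B : ℝ} (hab : a < b) (hB : 0 ≤ B)
    {V V' : ℝ → ℝ} (hV : ∀ t ∈ Ico 0 T, HasDerivAt V (V' t) t)
    (hV' : ∀ t ∈ Ico 0 T, (T - t) * V' t + a * V t ≤ B * (T - t) ^ b) :
    ∀ t ∈ Ico 0 T, V t ≤ (V 0 * T ^ (-a) + B / (b - a) * T ^ (b - a)) * (T - t) ^ a := by
  -- `V t ≤ K (T - t) ^ a` amounts to `V t * (T - t) ^ (-a)` being bounded; the forcing term is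
  -- absorbed by adding its primitive.
  set W : ℝ → ℝ := fun τ => V τ * (T - τ) ^ (-a) + B / (b - a) * (T - τ) ^ (b - a)
  have hW : ∀ t ∈ Ico 0 T, HasDerivAt W
      ((T - t) ^ (-a - 1) * ((T - t) * V' t + a * V t - B * (T - t) ^ b)) t := by
    intro t ht
    have hw : 0 < T - t := sub_pos.2 ht.2
    have hpow : ∀ r : ℝ, HasDerivAt (fun τ => (T - τ) ^ r) (-1 * r * (T - t) ^ (r - 1)) t :=
      fun r => ((hasDerivAt_id t).const_sub T).rpow_const (.inl hw.ne')
    refine (((hV t ht).mul (hpow (-a))).add ((hpow (b - a)).const_mul (B / (b - a)))).congr_deriv ?_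
    have e₁ : (T - t) ^ (-a) = (T - t) ^ (-a - 1) * (T - t) := by
      rw [← Real.rpow_add_one hw.ne']; ring_nf
    have e₂ : (T - t) ^ (b - a - 1) = (T - t) ^ (-a - 1) * (T - t) ^ b := by
      rw [← Real.rpow_add hw]; ring_nf
    rw [e₁, e₂]
    field_simp [(sub_pos.2 hab).ne']
    ring
  have hanti : AntitoneOn W (Ico 0 T) := by
    refine antitoneOn_of_hasDerivWithinAt_nonpos (convex_Ico 0 T)
      (f' := fun t => (T - t) ^ (-a - 1) * ((T - t) * V' t + a * V t - B * (T - t) ^ b))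
      (fun t ht => (hW t ht).continuousAt.continuousWithinAt) (fun t ht => ?_) (fun t ht => ?_)
    all_goals rw [interior_Ico] at ht
    · exact (hW t (Ioo_subset_Ico_self ht)).hasDerivWithinAt
    · exact mul_nonpos_of_nonneg_of_nonpos (Real.rpow_nonneg (sub_pos.2 ht.2).le _)
        (sub_nonpos.2 (hV' t (Ioo_subset_Ico_self ht)))
  intro t ht
  have hw : 0 < T - t := sub_pos.2 ht.2
  have hWt : W t ≤ W 0 := hanti ⟨le_rfl, ht.1.trans_lt ht.2⟩ ht ht.1
  have htail : 0 ≤ B / (b - a) * (T - t) ^ (b - a) :=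
    mul_nonneg (div_nonneg hB (sub_pos.2 hab).le) (Real.rpow_nonneg hw.le _)
  calc V t = V t * (T - t) ^ (-a) * (T - t) ^ a := by
        rw [Real.rpow_neg hw.le, mul_assoc, inv_mul_cancel₀ (Real.rpow_pos_of_pos hw a).ne',
          mul_one]
    _ ≤ W 0 * (T - t) ^ a := by
        gcongr
        simp only [W] at hWt ⊢
        linarith
    _ = _ := by simp [W]

theorem tendsto_sub_rpow_nhdsLT {T p : ℝ} (hp : 0 < p) :
    Tendsto (fun t => (T - t) ^ p) (𝓝[<] T) (𝓝 0) := by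
  refine Tendsto.rpow_const_nhds_zero ?_ hp
  have h : Tendsto (fun t => T - t) (𝓝 T) (𝓝 (T - T)) := tendsto_const_nhds.sub tendsto_id
  exact (sub_self T ▸ h).mono_left nhdsWithin_le_nhds

theorem tendsto_div_pow_of_sq_le_rpow {T K p : ℝ} {n : ℕ} (hnp : 2 * n < p) {f : ℝ → ℝ}
    (hf : ∀ᶠ t in 𝓝[<] T, f t ^ 2 ≤ K * (T - t) ^ p) :
    Tendsto (fun t => f t / (T - t) ^ n) (𝓝[<] T) (𝓝 0) := by
  have hsq : Tendsto (fun t => (f t / (T - t) ^ n) ^ 2) (𝓝[<] T) (𝓝 0) := by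
    refine squeeze_zero' (.of_forall fun t => sq_nonneg _) ?_
      (by simpa using (tendsto_sub_rpow_nhdsLT (T := T) (sub_pos.2 hnp)).const_mul K)
    filter_upwards [hf, self_mem_nhdsWithin] with t ht hlt
    have hw : 0 < T - t := sub_pos.2 hlt
    rw [div_pow, div_le_iff₀ (by positivity), ← pow_mul, ← Real.rpow_natCast (T - t) (n * 2),
      mul_assoc, ← Real.rpow_add hw]
    rwa [show p - 2 * n + ((n * 2 : ℕ) : ℝ) = p by push_cast; ring]
  have habs := hsq.sqrt
  simp only [Real.sqrt_sq_eq_abs, Real.sqrt_zero] at habs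
  exact (tendsto_zero_iff_abs_tendsto_zero _).2 habs

section ErrorSystem

variable {T : ℝ} {z₁ z₂ : ℝ → ℝ}

theorem exists_sq_add_sq_le_of_hasDerivAt {η₁ η₂ μ : ℝ} (hμ₁ : μ ≤ η₁) (hμ₂ : μ ≤ η₂)
    (h₁ : ∀ t ∈ Ico 0 T, HasDerivAt z₁ (z₂ t - η₁ * z₁ t / (T - t)) t)
    (h₂ : ∀ t ∈ Ico 0 T, HasDerivAt z₂ (-z₁ t - η₂ * z₂ t / (T - t)) t) :
    ∃ C, ∀ t ∈ Ico 0 T, z₁ t ^ 2 + z₂ t ^ 2 ≤ C * (T - t) ^ (2 * μ) := by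
  refine ⟨_, le_mul_rpow_of_sub_mul_deriv_add_le (lt_add_one (2 * μ)) le_rfl
    (fun t ht => ((h₁ t ht).pow 2).add ((h₂ t ht).pow 2)) fun t ht => ?_⟩
  have hw : T - t ≠ 0 := (sub_pos.2 ht.2).ne'
  calc _ = 2 * (μ - η₁) * z₁ t ^ 2 + 2 * (μ - η₂) * z₂ t ^ 2 := by field_simp; ring
    _ ≤ 0 := by nlinarith [sq_nonneg (z₁ t), sq_nonneg (z₂ t)]
    _ = 0 * (T - t) ^ (2 * μ + 1) := (zero_mul _).symm

theorem exists_sq_le_of_hasDerivAt_of_sq_le {η s b C : ℝ} (hsη : s < 2 * η) (hsb : s < b + 2)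
    (h₁ : ∀ t ∈ Ico 0 T, HasDerivAt z₁ (z₂ t - η * z₁ t / (T - t)) t)
    (h₂ : ∀ t ∈ Ico 0 T, z₂ t ^ 2 ≤ C * (T - t) ^ b) :
    ∃ M, ∀ t ∈ Ico 0 T, z₁ t ^ 2 ≤ M * (T - t) ^ s := by
  set κ := 2 * η - s
  have hκ : 0 < κ := sub_pos.2 hsη
  refine ⟨_, le_mul_rpow_of_sub_mul_deriv_add_le hsb (div_nonneg (abs_nonneg C) hκ.le)
    (fun t ht => (h₁ t ht).pow 2) fun t ht => ?_⟩
  have hw : 0 < T - t := sub_pos.2 ht.2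
  have hforcing : (T - t) ^ 2 * z₂ t ^ 2 ≤ |C| * (T - t) ^ (b + 2) := by
    calc _ ≤ (T - t) ^ 2 * (|C| * (T - t) ^ b) := by
          gcongr
          exact (h₂ t ht).trans (by gcongr; exact le_abs_self C)
      _ = |C| * (T - t) ^ (b + 2) := by rw [Real.rpow_add hw, Real.rpow_two]; ring
  calc _ = 2 * (T - t) * z₁ t * z₂ t - κ * z₁ t ^ 2 := by field_simp; ring
    _ ≤ (T - t) ^ 2 * z₂ t ^ 2 / κ := by
        rw [le_div_iff₀ hκ]
        nlinarith [sq_nonneg ((T - t) * z₂ t - κ * z₁ t)]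
    _ ≤ |C| / κ * (T - t) ^ (b + 2) := by
        rw [div_mul_eq_mul_div]
        gcongr

theorem tendsto_div_pow_of_error_system {η₁ η₂ : ℝ} (hT : 0 < T) (hη₁ : 2 < η₁) (hη₂ : 1 < η₂)
    (h₁ : ∀ t ∈ Ico 0 T, HasDerivAt z₁ (z₂ t - η₁ * z₁ t / (T - t)) t)
    (h₂ : ∀ t ∈ Ico 0 T, HasDerivAt z₂ (-z₁ t - η₂ * z₂ t / (T - t)) t) :
    (∀ n : ℕ, n ≤ 2 → Tendsto (fun t => z₁ t / (T - t) ^ n) (𝓝[<] T) (𝓝 0)) ∧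
      ∀ n : ℕ, n ≤ 1 → Tendsto (fun t => z₂ t / (T - t) ^ n) (𝓝[<] T) (𝓝 0) := by
  set μ := min η₁ η₂
  have hμ : 1 < μ := lt_min (by linarith) hη₂
  obtain ⟨C, hC⟩ := exists_sq_add_sq_le_of_hasDerivAt (min_le_left η₁ η₂) (min_le_right η₁ η₂)
    h₁ h₂
  have hC₂ : ∀ t ∈ Ico 0 T, z₂ t ^ 2 ≤ C * (T - t) ^ (2 * μ) := fun t ht => by
    nlinarith [hC t ht, sq_nonneg (z₁ t)]
  -- any `s` with `4 < s < min (2 * η₁) (2 * μ + 2)` works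
  set s := 2 + min η₁ (μ + 1)
  have hs : 4 < s := by linarith [lt_min (by linarith : 2 < η₁) (by linarith : 2 < μ + 1)]
  obtain ⟨M, hM⟩ := exists_sq_le_of_hasDerivAt_of_sq_le (s := s)
    (by linarith [min_le_left η₁ (μ + 1)]) (by linarith [min_le_right η₁ (μ + 1)]) h₁ hC₂
  have hIco : Ico 0 T ∈ 𝓝[<] T := Ico_mem_nhdsLT hT
  refine ⟨fun n hn => tendsto_div_pow_of_sq_le_rpow ?_ (mem_of_superset hIco hM),
    fun n hn => tendsto_div_pow_of_sq_le_rpow ?_ (mem_of_superset hIco hC₂)⟩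
  all_goals
    have hn' : (n : ℝ) ≤ _ := Nat.cast_le.2 hn
    push_cast at hn'
    linarith

end ErrorSystem

/-- Theorem 1 for the double integrator in original coordinates: under the
backstepping controller
`u = −η₁x₂/(T_p−t) − η₁(x₁−c)/(T_p−t)² − (x₁−c) − η₂(x₂ + η₁(x₁−c)/(T_p−t))/(T_p−t)`
with `η₁ > 2`, `η₂ > 1`, every solution of `x₁' = x₂`, `x₂' = u` on `[0, T_p)`
satisfies `x₁(t) → c`, `x₂(t) → 0` and `u(x₁(t), x₂(t), t) → 0` as `t → T_p⁻`. -/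
theorem double_integrator_prescribed_instant
    (Tp c η₁ η₂ : ℝ) (hTp : 0 < Tp) (hη₁ : 2 < η₁) (hη₂ : 1 < η₂)
    (u : ℝ → ℝ → ℝ → ℝ)
    (hu : ∀ a b t, u a b t =
      -η₁ * b / (Tp - t) - η₁ * (a - c) / (Tp - t) ^ 2 - (a - c)
        - η₂ * (b + η₁ * (a - c) / (Tp - t)) / (Tp - t))
    (x₁ x₂ : ℝ → ℝ)
    (hx₁ : ∀ t ∈ Ico (0 : ℝ) Tp, HasDerivAt x₁ (x₂ t) t)
    (hx₂ : ∀ t ∈ Ico (0 : ℝ) Tp, HasDerivAt x₂ (u (x₁ t) (x₂ t) t) t) :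
    Tendsto x₁ (𝓝[<] Tp) (𝓝 c) ∧
      Tendsto x₂ (𝓝[<] Tp) (𝓝 0) ∧
      Tendsto (fun t => u (x₁ t) (x₂ t) t) (𝓝[<] Tp) (𝓝 0) := by
  set z₁ : ℝ → ℝ := fun t => x₁ t - c
  set z₂ : ℝ → ℝ := fun t => x₂ t + η₁ * z₁ t / (Tp - t)
  have hz₁ : ∀ t ∈ Ico 0 Tp, HasDerivAt z₁ (z₂ t - η₁ * z₁ t / (Tp - t)) t := fun t ht =>
    ((hx₁ t ht).sub_const c).congr_deriv (by simp only [z₂]; ring)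
  have hz₂ : ∀ t ∈ Ico 0 Tp, HasDerivAt z₂ (-z₁ t - η₂ * z₂ t / (Tp - t)) t := fun t ht =>
    ((hx₂ t ht).add ((((hx₁ t ht).sub_const c).const_mul η₁).div
      ((hasDerivAt_id t).const_sub Tp) (sub_pos.2 ht.2).ne')).congr_deriv
      (by simp only [hu, z₁, z₂, id]; field_simp [(sub_pos.2 ht.2).ne']; ring)
  obtain ⟨lim₁, lim₂⟩ := tendsto_div_pow_of_error_system hTp hη₁ hη₂ hz₁ hz₂
  refine ⟨?_, ?_, ?_⟩
  · simpa [z₁] using (lim₁ 0 (by norm_num)).add_const c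
  · have h := (lim₂ 0 (by norm_num)).sub ((lim₁ 1 (by norm_num)).const_mul η₁)
    rw [mul_zero, sub_zero] at h
    refine h.congr fun t => ?_
    simp only [z₂]
    ring
  · have h := ((lim₁ 0 (by norm_num)).neg.add ((lim₁ 2 le_rfl).const_mul (η₁ ^ 2 - η₁))).sub
      ((lim₂ 1 le_rfl).const_mul (η₁ + η₂))
    rw [neg_zero, mul_zero, mul_zero, add_zero, sub_zero] at h
    refine h.congr' (eventually_nhdsWithin_of_forall fun t (ht : t < Tp) => ?_)
    simp only [hu, z₁, z₂]
    field_simp [(sub_pos.2 ht).ne']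
    ring
end
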